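/- Let 𝓛: H → ℝ be differentiable, μ-strongly convex with L-Lipschitz gradient, where 0 < μ ≤ L, on a real inner product space H, with global minimizer θ⋆. Let (θ^{(t)})_{t≥1} and (e^{(t)})_{t≥1} be sequences in H satisfying θ^{(t+1)} = θ^{(t)} − (1/L)(∇𝓛(θ^{(t)}) − e^{(t)}) for all t ≥ 1, and let N > 0 and D^{(t)} ≥ 0 be real numbers with ‖e^{(t)}‖² ≤ 2N·D^{(t)} for all t. Then for every t ≥ 1: 𝓛(θ^{(t+1)}) − 𝓛(θ⋆) ≤ (1 − μ/L)^t (𝓛(θ^{(1)}) − 𝓛(θ⋆)) + Σ_{t'=1}^{t} (1 − μ/L)^{t−t'} (N/L) D^{(t')}. -/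

import Mathlib

open scoped RealInnerProductSpace

lemma descent_lemma' {H : Type*} [NormedAddCommGroup H] [InnerProductSpace ℝ H]
    [CompleteSpace H]
    (𝓛 : H → ℝ) (g : H → H) (L : ℝ)
    (hgrad : ∀ x, HasGradientAt 𝓛 (g x) x)
    (hlip : ∀ x y, ‖g x - g y‖ ≤ L * ‖x - y‖) (x v : H) :
    𝓛 (x + v) ≤ 𝓛 x + ⟪g x, v⟫ + L / 2 * ‖v‖ ^ 2 := by
  set ψ : ℝ → ℝ := fun s => 𝓛 (x + s • v) - s * ⟪g x, v⟫ - s ^ 2 * (L / 2 * ‖v‖ ^ 2) with hψ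
  have hderiv : ∀ s : ℝ, HasDerivAt ψ
      (⟪g (x + s • v), v⟫ - ⟪g x, v⟫ - 2 * s * (L / 2 * ‖v‖ ^ 2)) s := by
    intro s
    have hc : HasDerivAt (fun s : ℝ => x + s • v) v s := by
      simpa using ((hasDerivAt_id s).smul_const v).const_add x
    have h1 : HasDerivAt (fun s : ℝ => 𝓛 (x + s • v)) ⟪g (x + s • v), v⟫ s := by
      have := (hgrad (x + s • v)).hasFDerivAt.comp_hasDerivAt s hc
      simp at this
      exact this
    have h2 : HasDerivAt (fun s : ℝ => s * ⟪g x, v⟫) ⟪g x, v⟫ s := by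
      simpa using (hasDerivAt_id s).mul_const ⟪g x, v⟫
    have h3 : HasDerivAt (fun s : ℝ => s ^ 2 * (L / 2 * ‖v‖ ^ 2))
        (2 * s * (L / 2 * ‖v‖ ^ 2)) s := by
      have := (hasDerivAt_pow 2 s).mul_const (L / 2 * ‖v‖ ^ 2)
      simpa [mul_comm] using this
    exact (h1.sub h2).sub h3
  have hanti : AntitoneOn ψ (Set.Icc 0 1) := by
    apply antitoneOn_of_deriv_nonpos (convex_Icc 0 1)
    · exact fun s _ => ((hderiv s).continuousAt).continuousWithinAt
    · exact fun s hs => (hderiv s).differentiableAt.differentiableWithinAt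
    · intro s hs
      rw [(hderiv s).deriv]
      rw [interior_Icc] at hs
      have hs0 : 0 < s := hs.1
      have hinner : ⟪g (x + s • v) - g x, v⟫ ≤ L * s * ‖v‖ ^ 2 := by
        calc ⟪g (x + s • v) - g x, v⟫ ≤ ‖g (x + s • v) - g x‖ * ‖v‖ :=
              real_inner_le_norm _ _
          _ ≤ (L * ‖(x + s • v) - x‖) * ‖v‖ := by
              gcongr; exact hlip _ _
          _ = L * s * ‖v‖ ^ 2 := by
              simp [norm_smul, abs_of_pos hs0]; ring
      have : ⟪g (x + s • v), v⟫ - ⟪g x, v⟫ = ⟪g (x + s • v) - g x, v⟫ := by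
        rw [inner_sub_left]
      rw [this]
      nlinarith [hinner]
  have := hanti (Set.left_mem_Icc.2 one_pos.le) (Set.right_mem_Icc.2 one_pos.le) one_pos.le
  simp only [hψ] at this
  simp at this
  linarith [this]

lemma pl_ineq' {H : Type*} [NormedAddCommGroup H] [InnerProductSpace ℝ H]
    (𝓛 : H → ℝ) (g : H → H) (μ : ℝ) (hμ : 0 < μ)
    (hsc : ∀ x y, 𝓛 y ≥ 𝓛 x + ⟪g x, y - x⟫ + (μ / 2) * ‖y - x‖ ^ 2)
    (θstar x : H) :
    2 * μ * (𝓛 x - 𝓛 θstar) ≤ ‖g x‖ ^ 2 := by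
  have h := hsc x θstar
  set v := θstar - x with hv
  have key : (0:ℝ) ≤ μ ^ 2 * ‖v‖ ^ 2 + 2 * μ * ⟪g x, v⟫ + ‖g x‖ ^ 2 := by
    have h0 : (0:ℝ) ≤ ‖μ • v + g x‖ ^ 2 := sq_nonneg _
    rw [norm_add_sq_real, norm_smul, inner_smul_left] at h0
    simp only [Real.norm_eq_abs, abs_of_pos hμ, conj_trivial] at h0
    have hc : ⟪v, g x⟫ = ⟪g x, v⟫ := real_inner_comm _ _
    rw [hc] at h0
    nlinarith [h0]
  have h1 : 𝓛 x - 𝓛 θstar ≤ -⟪g x, v⟫ - μ / 2 * ‖v‖ ^ 2 := by linarith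
  nlinarith [mul_le_mul_of_nonneg_left h1 (by linarith : (0:ℝ) ≤ 2 * μ), key]

/-- Theorem 1 of the paper (deterministic form): convergence bound of the noisy
gradient descent iterates with learning rate `1/L` and error bound `‖e^{(t)}‖² ≤ 2N·D^{(t)}`. -/
theorem ofl_convergence_bound
    {H : Type*} [NormedAddCommGroup H] [InnerProductSpace ℝ H] [CompleteSpace H]
    (𝓛 : H → ℝ) (g : H → H) (μ L : ℝ) (hμ : 0 < μ) (hμL : μ ≤ L)
    (hgrad : ∀ x, HasGradientAt 𝓛 (g x) x)
    (hlip : ∀ x y, ‖g x - g y‖ ≤ L * ‖x - y‖)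
    (hsc : ∀ x y, 𝓛 y ≥ 𝓛 x + ⟪g x, y - x⟫ + (μ / 2) * ‖y - x‖ ^ 2)
    (θstar : H) (hmin : ∀ θ', 𝓛 θstar ≤ 𝓛 θ')
    (θ : ℕ → H) (e : ℕ → H)
    (hiter : ∀ t, 1 ≤ t → θ (t + 1) = θ t - (1 / L) • (g (θ t) - e t))
    (N : ℝ) (hN : 0 < N) (D : ℕ → ℝ) (hD : ∀ t, 0 ≤ D t)
    (herr : ∀ t, ‖e t‖ ^ 2 ≤ 2 * N * D t) :
    ∀ t, 1 ≤ t →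
      𝓛 (θ (t + 1)) - 𝓛 θstar ≤
        (1 - μ / L) ^ t * (𝓛 (θ 1) - 𝓛 θstar) +
          ∑ t' ∈ Finset.Icc 1 t, (1 - μ / L) ^ (t - t') * (N / L) * D t' := by
  have hL : 0 < L := lt_of_lt_of_le hμ hμL
  -- one-step bound
  have honestep : ∀ t, 1 ≤ t →
      𝓛 (θ (t + 1)) - 𝓛 θstar ≤
        (1 - μ / L) * (𝓛 (θ t) - 𝓛 θstar) + (N / L) * D t := by
    intro t ht
    set x := θ t with hx
    set v : H := -((1 / L) • (g x - e t)) with hvdef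
    have hθ : θ (t + 1) = x + v := by
      rw [hiter t ht, sub_eq_add_neg]
    have hd := descent_lemma' 𝓛 g L hgrad hlip x v
    have hin : ⟪g x, v⟫ = -(1 / L) * (‖g x‖ ^ 2 - ⟪g x, e t⟫) := by
      rw [hvdef, inner_neg_right, inner_smul_right, inner_sub_right,
        real_inner_self_eq_norm_sq]
      ring
    have hnv : ‖v‖ ^ 2 = (1 / L) ^ 2 * (‖g x‖ ^ 2 - 2 * ⟪g x, e t⟫ + ‖e t‖ ^ 2) := by
      rw [hvdef, norm_neg, norm_smul, mul_pow, norm_sub_sq_real]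
      simp [Real.norm_eq_abs, abs_of_pos (by positivity : (0:ℝ) < 1 / L)]
    rw [hin, hnv] at hd
    have hstep : 𝓛 (x + v) ≤ 𝓛 x - 1 / (2 * L) * ‖g x‖ ^ 2 + 1 / (2 * L) * ‖e t‖ ^ 2 := by
      refine hd.trans_eq ?_
      field_simp
      ring
    have hpl := pl_ineq' 𝓛 g μ hμ hsc θstar x
    have hpl' := mul_le_mul_of_nonneg_left hpl (by positivity : (0:ℝ) ≤ 1 / (2 * L))
    have herr' := mul_le_mul_of_nonneg_left (herr t) (by positivity : (0:ℝ) ≤ 1 / (2 * L))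
    rw [hθ]
    have hexp : 1 / (2 * L) * (2 * μ * (𝓛 x - 𝓛 θstar)) = μ / L * (𝓛 x - 𝓛 θstar) := by
      field_simp
    have hexp2 : 1 / (2 * L) * (2 * N * D t) = N / L * D t := by
      field_simp
    rw [hexp] at hpl'
    rw [hexp2] at herr'
    nlinarith [hstep, hpl', herr']
  have hcoef : (0:ℝ) ≤ 1 - μ / L := by
    have : μ / L ≤ 1 := (div_le_one hL).2 hμL
    linarith
  intro t
  induction t with
  | zero => intro h; omega
  | succ n ih =>
    intro _
    rcases Nat.eq_zero_or_pos n with hn | hn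
    · subst hn
      have h1 := honestep 1 le_rfl
      simpa using h1
    · have ihn := ih hn
      have hsum : ∑ t' ∈ Finset.Icc 1 n, (1 - μ / L) ^ (n + 1 - t') * (N / L) * D t'
          = (1 - μ / L) * ∑ t' ∈ Finset.Icc 1 n, (1 - μ / L) ^ (n - t') * (N / L) * D t' := by
        rw [Finset.mul_sum]
        refine Finset.sum_congr rfl fun i hi => ?_
        have hi' : i ≤ n := (Finset.mem_Icc.1 hi).2
        have : n + 1 - i = (n - i) + 1 := by omega
        rw [this, pow_succ]
        ring
      calc 𝓛 (θ (n + 1 + 1)) - 𝓛 θstar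
          ≤ (1 - μ / L) * (𝓛 (θ (n + 1)) - 𝓛 θstar) + (N / L) * D (n + 1) :=
            honestep (n + 1) (by omega)
        _ ≤ (1 - μ / L) * ((1 - μ / L) ^ n * (𝓛 (θ 1) - 𝓛 θstar) +
              ∑ t' ∈ Finset.Icc 1 n, (1 - μ / L) ^ (n - t') * (N / L) * D t') +
              (N / L) * D (n + 1) := by
            have := mul_le_mul_of_nonneg_left ihn hcoef
            linarith
        _ = (1 - μ / L) ^ (n + 1) * (𝓛 (θ 1) - 𝓛 θstar) +
              ∑ t' ∈ Finset.Icc 1 (n + 1), (1 - μ / L) ^ (n + 1 - t') * (N / L) * D t' := by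
            rw [Finset.sum_Icc_succ_top (by omega : 1 ≤ n + 1), hsum, pow_succ]
            simp
            ring
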